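/- arXiv:1702.05815 — 2 statements merged into one kernel-verified Lean document; each statement's English description precedes it below -/
import Mathlib

section
/- For the adapted sampling distribution, E[(I − δ_ω δ_ω*/p_ω) U_k g²(Λ_k) U_k* (I − δ_ω δ_ω*/p_ω)] = Σ_{i=1}^N (‖T_i g‖₂²/p_i) δ_i δ_i* − g²(L), which is dominated (in the Loewner order) by Σ_i (‖T_i g‖₂²/p_i) δ_i δ_i*; hence with p_i = ‖T_i g‖₂²/‖g(λ)‖₂² the total variance satisfies A² ≤ (1/M)·‖g(λ)‖∞²·‖g(λ)‖₂². -/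
/-- Localization of a kernel `g` at vertex `i`. -/
noncomputable def Tloc {N : ℕ} (U : Matrix (Fin N) (Fin N) ℝ) (lam : Fin N → ℝ)
    (g : ℝ → ℝ) (i : Fin N) : Fin N → ℝ :=
  fun n => ∑ ℓ, g (lam ℓ) * U i ℓ * U n ℓ

/-- The restricted eigenvector matrix `U_k` (columns where `g(λ_ℓ) ≠ 0`). -/
def Uk {N : ℕ} (U : Matrix (Fin N) (Fin N) ℝ) (Ksupp : Finset (Fin N)) :
    Matrix (Fin N) {ℓ // ℓ ∈ Ksupp} ℝ :=
  fun n ℓ => U n ℓ.1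

/-- The restricted diagonal matrix `g(Λ_k)`. -/
noncomputable def gLamk {N : ℕ} (lam : Fin N → ℝ) (g : ℝ → ℝ)
    (Ksupp : Finset (Fin N)) : Matrix {ℓ // ℓ ∈ Ksupp} {ℓ // ℓ ∈ Ksupp} ℝ :=
  Matrix.diagonal fun ℓ => g (lam ℓ.1)

/-- The rank-one matrix `δ_n δ_nᵀ`. -/
def deltaMat {N : ℕ} (n : Fin N) : Matrix (Fin N) (Fin N) ℝ :=
  Matrix.vecMulVec (Pi.single n 1) (Pi.single n 1)

/-- The matrix `g²(L) = U g²(Λ) Uᵀ`. -/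
noncomputable def gsqL {N : ℕ} (U : Matrix (Fin N) (Fin N) ℝ) (lam : Fin N → ℝ)
    (g : ℝ → ℝ) : Matrix (Fin N) (Fin N) ℝ :=
  U * Matrix.diagonal (fun ℓ => (g (lam ℓ)) ^ 2) * U.transpose

/-- The Bernstein summand `X = (1/M) g(Λ_k) U_kᵀ (δ_ω δ_ωᵀ/p_ω − I) U_k g(Λ_k)`. -/
noncomputable def bernsteinX {N : ℕ} (U : Matrix (Fin N) (Fin N) ℝ) (lam : Fin N → ℝ)
    (g : ℝ → ℝ) (Ksupp : Finset (Fin N)) (p : Fin N → ℝ) (M : ℕ) (ω : Fin N) :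
    Matrix {ℓ // ℓ ∈ Ksupp} {ℓ // ℓ ∈ Ksupp} ℝ :=
  (1 / (M : ℝ)) •
    (gLamk lam g Ksupp * (Uk U Ksupp).transpose *
      ((p ω)⁻¹ • deltaMat ω - 1) * Uk U Ksupp * gLamk lam g Ksupp)


/-! Expanding the sandwich and using `∑ p_i = 1` gives
`E[(I − δδᵀ/p)G(I − δδᵀ/p)] = diag(G_ii/p_i) − G` for `G = g²(L)`, and `G_ii = ‖T_i g‖₂²` because
`g(L)² = g²(L)`; the gap to `diag(G_ii/p_i)` is `G ⪰ 0`. For the adapted `p` every `G_ii/p_i`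
equals `‖g(λ)‖₂²`. With `B = U_k g(Λ_k)` one has `G = BBᵀ` and `BᵀB = g²(Λ_k)`, so
`M·E[X²] = (1/M) Bᵀ(‖g(λ)‖₂² I − BBᵀ)B ⪯ (1/M) ‖g(λ)‖₂² BᵀB ⪯ (1/M) ‖g(λ)‖₂² ‖g(λ)‖∞² I`. -/

open Finset Matrix

section Sandwich

variable {ι K : Type*} [Fintype ι] [DecidableEq ι] [Field K]

theorem smul_one_sub_single_sandwich (G : Matrix ι ι K) {q : K} (hq : q ≠ 0) (i : ι) :
    q • ((1 - q⁻¹ • single i i 1) * G * (1 - q⁻¹ • single i i 1)) =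
      q • G - single i i 1 * G - G * single i i 1 + single i i (G i i / q) := by
  simp only [Matrix.sub_mul, Matrix.mul_sub, Matrix.one_mul, Matrix.mul_one, Matrix.smul_mul,
    Matrix.mul_smul, single_mul_mul_single, smul_sub, smul_smul, mul_inv_cancel₀ hq, one_smul]
  rw [smul_single, show (q * (q⁻¹ * q⁻¹)) • (1 * G i i * 1) = G i i / q by
    rw [smul_eq_mul]; field_simp]
  abel

theorem sum_smul_one_sub_single_sandwich (G : Matrix ι ι K) {p : ι → K} (hp : ∀ i, p i ≠ 0)
    (hsum : ∑ i, p i = 1) :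
    ∑ i, p i • ((1 - (p i)⁻¹ • single i i 1) * G * (1 - (p i)⁻¹ • single i i 1)) =
      diagonal (fun i => G i i / p i) - G := by
  simp only [smul_one_sub_single_sandwich G (hp _)]
  rw [sum_add_distrib, sum_sub_distrib, sum_sub_distrib, ← sum_smul, hsum, one_smul,
    ← Matrix.sum_mul, ← Matrix.mul_sum, sum_single_one, Matrix.one_mul, Matrix.mul_one,
    sum_single_eq_diagonal]
  abel

end Sandwich

section QuadraticForm

variable {ι κ : Type*} [Fintype ι] [Fintype κ]

theorem dotProduct_transpose_mul_smul_one_sub_mul_le [DecidableEq ι] (B : Matrix ι κ ℝ)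
    (c : ℝ) (v : κ → ℝ) :
    v ⬝ᵥ ((Bᵀ * (c • 1 - B * Bᵀ) * B) *ᵥ v) ≤ c * (v ⬝ᵥ ((Bᵀ * B) *ᵥ v)) := by
  have hsq : 0 ≤ v ⬝ᵥ ((Bᵀ * B * (Bᵀ * B)) *ᵥ v) := by
    simpa [conjTranspose_eq_transpose_of_trivial, transpose_mul] using
      (posSemidef_conjTranspose_mul_self (Bᵀ * B)).dotProduct_mulVec_nonneg v
  have hexpand : Bᵀ * (c • 1 - B * Bᵀ) * B = c • (Bᵀ * B) - Bᵀ * B * (Bᵀ * B) := by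
    simp only [Matrix.mul_sub, Matrix.sub_mul, Matrix.mul_smul, Matrix.smul_mul, Matrix.mul_one,
      Matrix.mul_assoc]
  rw [hexpand, sub_mulVec, dotProduct_sub, smul_mulVec, dotProduct_smul, smul_eq_mul]
  linarith

theorem dotProduct_diagonal_mulVec_le [DecidableEq κ] {d : κ → ℝ} {c : ℝ} (hd : ∀ i, d i ≤ c)
    (v : κ → ℝ) : v ⬝ᵥ (diagonal d *ᵥ v) ≤ c * (v ⬝ᵥ v) := by
  simp only [mulVec_diagonal, dotProduct, mul_sum]
  exact sum_le_sum fun i _ => by nlinarith [mul_self_nonneg (v i), hd i]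

end QuadraticForm

theorem sum_eq_one_of_eq_div_sum {ι K : Type*} [Fintype ι] [Field K] {a p : ι → K}
    (hp : ∀ i, p i = a i / ∑ j, a j) {i₀ : ι} (hi₀ : p i₀ ≠ 0) : ∑ i, p i = 1 := by
  have hsum : ∑ j, a j ≠ 0 := fun h => hi₀ (by rw [hp, h, div_zero])
  simp only [hp, ← sum_div, div_self hsum]

theorem div_eq_of_eq_div_of_ne_zero {K : Type*} [Field K] {a p t : K} (hp : p = a / t)
    (hp0 : p ≠ 0) : a / p = t := by
  have ha : a ≠ 0 := fun h => hp0 (by rw [hp, h, zero_div])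
  rw [hp, div_div_cancel₀ ha]

theorem deltaMat_eq_single {N : ℕ} (n : Fin N) : deltaMat n = single n n 1 :=
  (single_eq_single_vecMulVec_single n n).symm

section Spectral

variable {N : ℕ} (U : Matrix (Fin N) (Fin N) ℝ) (lam : Fin N → ℝ) (g : ℝ → ℝ)

noncomputable def gL : Matrix (Fin N) (Fin N) ℝ :=
  U * diagonal (fun ℓ => g (lam ℓ)) * Uᵀ

theorem Tloc_eq_gL (i : Fin N) : Tloc U lam g i = gL U lam g i := by
  ext n
  simp only [Tloc, gL, mul_apply, diagonal_apply, transpose_apply, mul_ite, mul_zero,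
    sum_ite_eq', mem_univ, if_true]
  exact sum_congr rfl fun ℓ _ => by ring

theorem gL_transpose : (gL U lam g)ᵀ = gL U lam g := by
  simp only [gL, transpose_mul, transpose_transpose, diagonal_transpose, Matrix.mul_assoc]

theorem gL_mul_gL (hU : Uᵀ * U = 1) : gL U lam g * gL U lam g = gsqL U lam g := by
  simp only [gL, gsqL, Matrix.mul_assoc]
  rw [← Matrix.mul_assoc Uᵀ U, hU, Matrix.one_mul, ← Matrix.mul_assoc (diagonal _),
    diagonal_mul_diagonal]
  simp only [sq]

theorem sum_sq_Tloc (hU : Uᵀ * U = 1) (i : Fin N) :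
    ∑ m, Tloc U lam g i m ^ 2 = gsqL U lam g i i := by
  conv_rhs => rw [← gL_mul_gL U lam g hU]
  nth_rw 2 [← gL_transpose U lam g]
  simp only [Tloc_eq_gL, mul_apply, transpose_apply, sq]

theorem trace_gsqL (hU : Uᵀ * U = 1) : trace (gsqL U lam g) = ∑ ℓ, g (lam ℓ) ^ 2 := by
  rw [gsqL, trace_mul_comm, ← Matrix.mul_assoc, hU, Matrix.one_mul, trace_diagonal]

variable (Ksupp : Finset (Fin N))

theorem gLamk_transpose : (gLamk lam g Ksupp)ᵀ = gLamk lam g Ksupp := diagonal_transpose _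

theorem Uk_mul_gLamk_mul_transpose (hK : ∀ ℓ, g (lam ℓ) ≠ 0 → ℓ ∈ Ksupp) :
    Uk U Ksupp * gLamk lam g Ksupp * (Uk U Ksupp * gLamk lam g Ksupp)ᵀ = gsqL U lam g := by
  ext n m
  have hvanish : ∀ ℓ ∉ Ksupp, U n ℓ * g (lam ℓ) ^ 2 * U m ℓ = 0 := fun ℓ hℓ => by
    rw [not_imp_comm.mp (hK ℓ) hℓ]; ring
  simp only [gsqL, Uk, gLamk, transpose_mul, diagonal_transpose, mul_apply, diagonal_apply,
    transpose_apply, mul_ite, ite_mul, mul_zero, zero_mul, sum_ite_eq, sum_ite_eq', mem_univ,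
    if_true]
  rw [sum_coe_sort Ksupp (fun ℓ => U n ℓ * g (lam ℓ) * (g (lam ℓ) * U m ℓ)),
    sum_subset (subset_univ Ksupp) fun ℓ _ hℓ => by rw [← hvanish ℓ hℓ]; ring]
  exact sum_congr rfl fun ℓ _ => by ring

theorem transpose_Uk_mul_Uk (hU : Uᵀ * U = 1) : (Uk U Ksupp)ᵀ * Uk U Ksupp = 1 := by
  have hsub : Uk U Ksupp = U.submatrix id Subtype.val := rfl
  rw [hsub, transpose_submatrix, ← submatrix_mul _ _ _ _ _ Function.bijective_id, hU]
  exact submatrix_one_embedding (Function.Embedding.subtype _)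

theorem transpose_mul_self_Uk_mul_gLamk (hU : Uᵀ * U = 1) :
    (Uk U Ksupp * gLamk lam g Ksupp)ᵀ * (Uk U Ksupp * gLamk lam g Ksupp) =
      diagonal fun ℓ => g (lam ℓ.1) ^ 2 := by
  rw [transpose_mul, gLamk_transpose, Matrix.mul_assoc, ← Matrix.mul_assoc (Uk U Ksupp)ᵀ,
    transpose_Uk_mul_Uk U Ksupp hU, Matrix.one_mul, gLamk, diagonal_mul_diagonal]
  simp only [sq]

theorem bernsteinX_mul_self (hK : ∀ ℓ, g (lam ℓ) ≠ 0 → ℓ ∈ Ksupp) (p : Fin N → ℝ) (M : ℕ)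
    (n : Fin N) :
    bernsteinX U lam g Ksupp p M n * bernsteinX U lam g Ksupp p M n =
      (1 / (M : ℝ)) ^ 2 • ((Uk U Ksupp * gLamk lam g Ksupp)ᵀ *
        ((1 - (p n)⁻¹ • deltaMat n) * gsqL U lam g * (1 - (p n)⁻¹ • deltaMat n)) *
          (Uk U Ksupp * gLamk lam g Ksupp)) := by
  set B := Uk U Ksupp * gLamk lam g Ksupp
  set D := (p n)⁻¹ • deltaMat n - 1
  have hX : bernsteinX U lam g Ksupp p M n = (1 / (M : ℝ)) • (Bᵀ * D * B) := by
    simp only [bernsteinX, B, D, transpose_mul, gLamk_transpose, Matrix.mul_assoc]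
  have hD : D = -(1 - (p n)⁻¹ • deltaMat n) := (neg_sub _ _).symm
  have hsandwich : Bᵀ * D * B * (Bᵀ * D * B) = Bᵀ * (D * (B * Bᵀ) * D) * B := by
    simp only [Matrix.mul_assoc]
  rw [hX, smul_mul_smul_comm, ← sq, hsandwich, Uk_mul_gLamk_mul_transpose U lam g Ksupp hK, hD,
    Matrix.neg_mul, neg_mul_neg]

theorem smul_sum_smul_bernsteinX_mul_self (hK : ∀ ℓ, g (lam ℓ) ≠ 0 → ℓ ∈ Ksupp)
    (p : Fin N → ℝ) (M : ℕ) :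
    (M : ℝ) • ∑ n, p n • (bernsteinX U lam g Ksupp p M n * bernsteinX U lam g Ksupp p M n) =
      (1 / (M : ℝ)) • ((Uk U Ksupp * gLamk lam g Ksupp)ᵀ *
        (∑ n, p n • ((1 - (p n)⁻¹ • deltaMat n) * gsqL U lam g * (1 - (p n)⁻¹ • deltaMat n))) *
          (Uk U Ksupp * gLamk lam g Ksupp)) := by
  have hM : (M : ℝ) * (1 / (M : ℝ)) ^ 2 = 1 / M := by
    have h := mul_inv_mul_cancel ((M : ℝ)⁻¹)
    rw [inv_inv] at h
    linear_combination h
  rw [Matrix.mul_sum, Matrix.sum_mul, smul_sum, smul_sum]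
  refine sum_congr rfl fun n _ => ?_
  rw [bernsteinX_mul_self U lam g Ksupp hK, Matrix.mul_smul, Matrix.smul_mul, smul_smul, smul_smul,
    smul_smul]
  congr 1
  linear_combination p n * hM

theorem dotProduct_Uk_gLamk_sandwich_le (hU : Uᵀ * U = 1) {c : ℝ} (hc : 0 ≤ c)
    (v : {ℓ // ℓ ∈ Ksupp} → ℝ) :
    v ⬝ᵥ (((Uk U Ksupp * gLamk lam g Ksupp)ᵀ *
        (c • 1 - Uk U Ksupp * gLamk lam g Ksupp * (Uk U Ksupp * gLamk lam g Ksupp)ᵀ) *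
          (Uk U Ksupp * gLamk lam g Ksupp)) *ᵥ v) ≤
      c * ((⨆ ℓ, g (lam ℓ) ^ 2) * (v ⬝ᵥ v)) := by
  calc _ ≤ c * (v ⬝ᵥ (((Uk U Ksupp * gLamk lam g Ksupp)ᵀ * (Uk U Ksupp * gLamk lam g Ksupp))
          *ᵥ v)) :=
        dotProduct_transpose_mul_smul_one_sub_mul_le _ c v
    _ ≤ c * ((⨆ ℓ, g (lam ℓ) ^ 2) * (v ⬝ᵥ v)) := by
        rw [transpose_mul_self_Uk_mul_gLamk U lam g Ksupp hU]
        gcongr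
        exact dotProduct_diagonal_mulVec_le
          (fun ℓ => le_ciSup (f := fun ℓ => g (lam ℓ) ^ 2) (Set.finite_range _).bddAbove ℓ.1) v

end Spectral

theorem bernstein_total_variance_bound_general {N : ℕ} (hN : 0 < N)
    (U : Matrix (Fin N) (Fin N) ℝ) (lam : Fin N → ℝ) (hU : U.transpose * U = 1)
    (g : ℝ → ℝ) (Ksupp : Finset (Fin N)) (hK : ∀ ℓ, ℓ ∈ Ksupp ↔ g (lam ℓ) ≠ 0)
    (p : Fin N → ℝ) (hp : ∀ i, 0 < p i)
    (hpdef : ∀ i, p i = (∑ n, (Tloc U lam g i n) ^ 2) / (∑ ℓ, (g (lam ℓ)) ^ 2))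
    (M : ℕ) :
    (∑ n : Fin N, p n •
          ((1 - (p n)⁻¹ • deltaMat n) * gsqL U lam g * (1 - (p n)⁻¹ • deltaMat n))
        = (∑ n : Fin N, ((∑ m, (Tloc U lam g n m) ^ 2) / p n) • deltaMat n)
            - gsqL U lam g) ∧
      Matrix.PosSemidef
        ((∑ n : Fin N, ((∑ m, (Tloc U lam g n m) ^ 2) / p n) • deltaMat n)
          - ∑ n : Fin N, p n •
              ((1 - (p n)⁻¹ • deltaMat n) * gsqL U lam g
                * (1 - (p n)⁻¹ • deltaMat n))) ∧
      ∀ v : {ℓ // ℓ ∈ Ksupp} → ℝ,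
        v ⬝ᵥ (((M : ℝ) • ∑ n : Fin N, p n •
            (bernsteinX U lam g Ksupp p M n * bernsteinX U lam g Ksupp p M n)).mulVec v)
          ≤ ((1 / (M : ℝ)) * (⨆ ℓ : Fin N, (g (lam ℓ)) ^ 2) * ∑ ℓ, (g (lam ℓ)) ^ 2)
              * (v ⬝ᵥ v) := by
  set G := gsqL U lam g
  set B := Uk U Ksupp * gLamk lam g Ksupp
  have hnorm : ∀ i, ∑ m, Tloc U lam g i m ^ 2 = G i i := sum_sq_Tloc U lam g hU
  have htrace : ∑ j, G j j = ∑ ℓ, g (lam ℓ) ^ 2 := trace_gsqL U lam g hU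
  have hpG : ∀ i, p i = G i i / ∑ j, G j j := fun i => by rw [hpdef, hnorm, htrace]
  have hsum : ∑ n, p n = 1 := sum_eq_one_of_eq_div_sum hpG (hp ⟨0, hN⟩).ne'
  have hvar : ∑ n, p n • ((1 - (p n)⁻¹ • deltaMat n) * G * (1 - (p n)⁻¹ • deltaMat n)) =
      diagonal (fun n => G n n / p n) - G := by
    simp only [deltaMat_eq_single]
    exact sum_smul_one_sub_single_sandwich G (fun i => (hp i).ne') hsum
  have hdiag : ∑ n, ((∑ m, Tloc U lam g n m ^ 2) / p n) • deltaMat n =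
      diagonal (fun n => G n n / p n) := by
    simp only [hnorm, deltaMat_eq_single, smul_single, smul_eq_mul, mul_one,
      sum_single_eq_diagonal]
  have hBB : B * Bᵀ = G := Uk_mul_gLamk_mul_transpose U lam g Ksupp fun ℓ => (hK ℓ).2
  refine ⟨by rw [hvar, hdiag], ?_, fun v => ?_⟩
  · rw [hdiag, hvar, sub_sub_cancel, ← hBB]
    simpa [conjTranspose_eq_transpose_of_trivial] using posSemidef_self_mul_conjTranspose B
  · have hadapted : diagonal (fun n => G n n / p n) = (∑ ℓ, g (lam ℓ) ^ 2) • 1 := by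
      rw [smul_one_eq_diagonal, ← htrace]
      exact congrArg diagonal (funext fun n => div_eq_of_eq_div_of_ne_zero (hpG n) (hp n).ne')
    rw [smul_sum_smul_bernsteinX_mul_self U lam g Ksupp (fun ℓ => (hK ℓ).2), hvar, hadapted,
      ← hBB, smul_mulVec, dotProduct_smul, smul_eq_mul]
    calc _ ≤ 1 / (M : ℝ) * ((∑ ℓ, g (lam ℓ) ^ 2) * ((⨆ ℓ, g (lam ℓ) ^ 2) * (v ⬝ᵥ v))) := by
          gcongr
          exact dotProduct_Uk_gLamk_sandwich_le U lam g Ksupp hU (by positivity) v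
      _ = _ := by ring

/-- Total-variance computation in the Bernstein argument: the expectation
`E[(I − δ_ω δ_ωᵀ/p_ω) g²(L) (I − δ_ω δ_ωᵀ/p_ω)]` equals
`Σ_i (‖T_i g‖₂²/p_i) δ_i δ_iᵀ − g²(L)`, is dominated in the Loewner order by
`Σ_i (‖T_i g‖₂²/p_i) δ_i δ_iᵀ`, and with the adapted probabilities
`p_i = ‖T_i g‖₂²/‖g(λ)‖₂²` the total variance `A² = σ_max(E[Σ_m X_m²])` is at most
`(1/M)·‖g(λ)‖∞²·‖g(λ)‖₂²`. -/
theorem bernstein_total_variance_bound {N : ℕ} (hN : 0 < N)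
    (U : Matrix (Fin N) (Fin N) ℝ) (lam : Fin N → ℝ) (hU : U.transpose * U = 1)
    (g : ℝ → ℝ) (Ksupp : Finset (Fin N)) (hK : ∀ ℓ, ℓ ∈ Ksupp ↔ g (lam ℓ) ≠ 0)
    (p : Fin N → ℝ) (hp : ∀ i, 0 < p i)
    (hpdef : ∀ i, p i = (∑ n, (Tloc U lam g i n) ^ 2) / (∑ ℓ, (g (lam ℓ)) ^ 2))
    (M : ℕ) (hM : 0 < M) :
    (∑ n : Fin N, p n •
          ((1 - (p n)⁻¹ • deltaMat n) * gsqL U lam g * (1 - (p n)⁻¹ • deltaMat n))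
        = (∑ n : Fin N, ((∑ m, (Tloc U lam g n m) ^ 2) / p n) • deltaMat n)
            - gsqL U lam g) ∧
      Matrix.PosSemidef
        ((∑ n : Fin N, ((∑ m, (Tloc U lam g n m) ^ 2) / p n) • deltaMat n)
          - ∑ n : Fin N, p n •
              ((1 - (p n)⁻¹ • deltaMat n) * gsqL U lam g
                * (1 - (p n)⁻¹ • deltaMat n))) ∧
      ∀ v : {ℓ // ℓ ∈ Ksupp} → ℝ,
        v ⬝ᵥ (((M : ℝ) • ∑ n : Fin N, p n •
            (bernsteinX U lam g Ksupp p M n * bernsteinX U lam g Ksupp p M n)).mulVec v)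
          ≤ ((1 / (M : ℝ)) * (⨆ ℓ : Fin N, (g (lam ℓ)) ^ 2) * ∑ ℓ, (g (lam ℓ)) ^ 2)
              * (v ⬝ᵥ v) :=
  bernstein_total_variance_bound_general hN U lam hU g Ksupp hK p hp hpdef M
end

section
/- Per-node energy capture (Theorem 2): under the adapted sampling scheme p_i = ‖T_i g‖₂²/‖g(λ)‖₂² with M i.i.d. samples, for any fixed node i and δ ∈ (0,1), if M ≥ (2a/δ²)(1 + δ/3) log(k/ε) where a = ‖g(λ)‖₂² ‖g(λ)‖∞² ‖U_k* δ_i‖₂⁴ / ‖T_i g‖₂⁴, then with probability at least 1 − ε: (1/M)‖M P^{−1/2} T_i g‖₂² / ‖T_i g‖₂² ≥ 1 − δ. -/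
open scoped Classical

/-! The sample mean of `‖T_i g‖₂² / p` over `M` i.i.d. draws from `p` is a sum of nonnegative
variables with mean `‖T_i g‖₂²`, each bounded by `R = ‖g(λ)‖₂² ‖U_k* δ_i‖₂²` (Cauchy–Schwarz on the
spectral support). A Chernoff bound on the lower tail, with the moment generating function
controlled by `exp (-x) ≤ 1 - x + x²/2`, bounds the failure probability by
`exp (-M δ² ‖T_i g‖₂² / (2R))`, and `R / ‖T_i g‖₂² ≤ a` because
`‖T_i g‖₂² ≤ ‖g(λ)‖∞² ‖U_k* δ_i‖₂²`. -/

open Finset Real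

theorem Real.exp_neg_le_one_sub_add_sq_div_two {x : ℝ} (hx : 0 ≤ x) :
    exp (-x) ≤ 1 - x + x ^ 2 / 2 := by
  have hpos : 0 < 1 + x + x ^ 2 / 2 := by positivity
  rw [exp_neg]
  refine (inv_anti₀ hpos (quadratic_le_exp_of_nonneg hx)).trans ?_
  rw [inv_le_iff_one_le_mul₀ hpos]
  -- `(1 + x + x²/2)(1 - x + x²/2) = 1 + x⁴/4`
  nlinarith [pow_nonneg hx 4]

section IidSampling

variable {α : Type*} [Fintype α] (p : α → ℝ) (M : ℕ)

noncomputable def iidProb (E : (Fin M → α) → Prop) [DecidablePred E] : ℝ :=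
  ∑ ω : Fin M → α, if E ω then ∏ j, p (ω j) else 0

variable {p M}

theorem iidProb_nonneg (hp : ∀ a, 0 ≤ p a) (E : (Fin M → α) → Prop) [DecidablePred E] :
    0 ≤ iidProb p M E :=
  sum_nonneg fun ω _ => by
    split_ifs
    exacts [prod_nonneg fun j _ => hp (ω j), le_rfl]

theorem iidProb_mono (hp : ∀ a, 0 ≤ p a) {E F : (Fin M → α) → Prop} [DecidablePred E]
    [DecidablePred F] (h : ∀ ω, E ω → F ω) : iidProb p M E ≤ iidProb p M F :=
  sum_le_sum fun ω _ => by
    by_cases hE : E ω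
    · simp [hE, h ω hE]
    · rw [if_neg hE]
      split_ifs
      exacts [prod_nonneg fun j _ => hp (ω j), le_rfl]

theorem iidProb_not (hp1 : ∑ a, p a = 1) (E : (Fin M → α) → Prop) [DecidablePred E] :
    iidProb p M (fun ω => ¬E ω) = 1 - iidProb p M E := by
  have htotal : ∑ ω : Fin M → α, ∏ j, p (ω j) = 1 := by
    rw [← Fintype.sum_pow, hp1, one_pow]
  rw [eq_sub_iff_add_eq, iidProb, iidProb, ← sum_add_distrib, ← htotal]
  refine sum_congr rfl fun ω _ => ?_
  by_cases hE : E ω <;> simp [hE]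

theorem iidProb_sum_lt_le (hp : ∀ a, 0 ≤ p a) (X : α → ℝ) {θ : ℝ} (hθ : 0 ≤ θ) (c : ℝ) :
    iidProb p M (fun ω => ∑ j, X (ω j) < c)
      ≤ exp (θ * c) * (∑ a, p a * exp (-(θ * X a))) ^ M := by
  rw [Fintype.sum_pow, mul_sum]
  refine sum_le_sum fun ω _ => ?_
  have hfactor : exp (θ * c) * ∏ j, p (ω j) * exp (-(θ * X (ω j)))
      = exp (θ * (c - ∑ j, X (ω j))) * ∏ j, p (ω j) := by
    rw [prod_mul_distrib, ← exp_sum, ← mul_assoc, mul_comm (exp _), mul_assoc,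
      ← exp_add, sum_neg_distrib, ← mul_sum, mul_sub, sub_eq_add_neg]
    ring_nf
  rw [hfactor]
  split_ifs with hlt
  · exact le_mul_of_one_le_left (prod_nonneg fun j _ => hp (ω j))
      (one_le_exp (mul_nonneg hθ (sub_nonneg.2 hlt.le)))
  · exact mul_nonneg (exp_nonneg _) (prod_nonneg fun j _ => hp (ω j))

theorem sum_mul_exp_neg_le (hp : ∀ a, 0 ≤ p a) (hp1 : ∑ a, p a = 1) {X : α → ℝ}
    (hX : ∀ a, 0 ≤ X a) {θ : ℝ} (hθ : 0 ≤ θ) :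
    ∑ a, p a * exp (-(θ * X a))
      ≤ exp (θ ^ 2 / 2 * ∑ a, p a * X a ^ 2 - θ * ∑ a, p a * X a) := by
  calc ∑ a, p a * exp (-(θ * X a))
      ≤ ∑ a, p a * (1 - θ * X a + (θ * X a) ^ 2 / 2) :=
        sum_le_sum fun a _ => mul_le_mul_of_nonneg_left
          (exp_neg_le_one_sub_add_sq_div_two (mul_nonneg hθ (hX a))) (hp a)
    _ = ∑ a, (p a - θ * (p a * X a) + θ ^ 2 / 2 * (p a * X a ^ 2)) :=
        sum_congr rfl fun a _ => by ring
    _ = 1 + (θ ^ 2 / 2 * ∑ a, p a * X a ^ 2 - θ * ∑ a, p a * X a) := by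
        rw [sum_add_distrib, sum_sub_distrib, ← mul_sum, ← mul_sum, hp1]
        ring
    _ ≤ _ := by
        rw [add_comm]
        exact add_one_le_exp _

theorem sum_mul_sq_le_mul_sum (hp : ∀ a, 0 ≤ p a) {X : α → ℝ} (hX : ∀ a, 0 ≤ X a) {R : ℝ}
    (hXR : ∀ a, X a ≤ R) : ∑ a, p a * X a ^ 2 ≤ R * ∑ a, p a * X a := by
  rw [mul_sum]
  refine sum_le_sum fun a _ => ?_
  rw [sq, ← mul_assoc, mul_comm R]
  exact mul_le_mul_of_nonneg_left (hXR a) (mul_nonneg (hp a) (hX a))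

theorem iidProb_sum_lt_le_exp (hp : ∀ a, 0 ≤ p a) (hp1 : ∑ a, p a = 1) {X : α → ℝ}
    (hX : ∀ a, 0 ≤ X a) {R : ℝ} (hR : 0 < R) (hXR : ∀ a, X a ≤ R) {δ : ℝ} (hδ : 0 ≤ δ) :
    iidProb p M (fun ω => ∑ j, X (ω j) < (1 - δ) * M * ∑ a, p a * X a)
      ≤ exp (-(M * δ ^ 2 * (∑ a, p a * X a) / (2 * R))) := by
  set μ := ∑ a, p a * X a
  have hθ : 0 ≤ δ / R := div_nonneg hδ hR.le
  have hmgf : ∑ a, p a * exp (-(δ / R * X a))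
      ≤ exp ((δ / R) ^ 2 / 2 * (R * μ) - δ / R * μ) :=
    (sum_mul_exp_neg_le hp hp1 hX hθ).trans <| exp_le_exp.2 <| by
      gcongr
      exact sum_mul_sq_le_mul_sum hp hX hXR
  calc _ ≤ exp (δ / R * ((1 - δ) * M * μ))
        * (∑ a, p a * exp (-(δ / R * X a))) ^ M := iidProb_sum_lt_le hp X hθ _
    _ ≤ exp (δ / R * ((1 - δ) * M * μ))
        * exp ((δ / R) ^ 2 / 2 * (R * μ) - δ / R * μ) ^ M := by
        gcongr
        exact sum_nonneg fun a _ => mul_nonneg (hp a) (exp_nonneg _)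
    _ = _ := by
        rw [← exp_nat_mul, ← exp_add]
        congr 1
        field_simp
        ring

theorem one_sub_exp_le_iidProb_sampleMean_div_ge (hp : ∀ a, 0 ≤ p a) (hp1 : ∑ a, p a = 1)
    {X : α → ℝ} (hX : ∀ a, 0 ≤ X a) {R : ℝ} (hR : 0 < R) (hXR : ∀ a, X a ≤ R) {δ : ℝ}
    (hδ : 0 ≤ δ) (hμ : 0 < ∑ a, p a * X a) :
    1 - exp (-(M * δ ^ 2 * (∑ a, p a * X a) / (2 * R)))
      ≤ iidProb p M (fun ω => (1 / (M : ℝ) * ∑ j, X (ω j)) / ∑ a, p a * X a ≥ 1 - δ) := by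
  rcases M.eq_zero_or_pos with rfl | hM
  · simpa using iidProb_nonneg hp _
  rw [← sub_sub_cancel 1 (iidProb p M _), ← iidProb_not hp1]
  refine sub_le_sub_left ((iidProb_mono hp fun ω hω => ?_).trans
    (iidProb_sum_lt_le_exp hp hp1 hX hR hXR hδ)) 1
  rw [ge_iff_le, not_le, div_lt_iff₀ hμ, one_div, inv_mul_lt_iff₀ (by exact_mod_cast hM)] at hω
  linarith

end IidSampling

section Localization

open Matrix

variable {N : ℕ} (U : Matrix (Fin N) (Fin N) ℝ) (lam : Fin N → ℝ) (g : ℝ → ℝ)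

theorem Matrix.dotProduct_mulVec_self_of_transpose_mul_self {m n R : Type*} [Fintype m]
    [Fintype n] [DecidableEq n] [CommSemiring R] {A : Matrix m n R} (hA : A.transpose * A = 1)
    (v : n → R) : A *ᵥ v ⬝ᵥ A *ᵥ v = v ⬝ᵥ v := by
  rw [dotProduct_mulVec, ← mulVec_transpose, mulVec_mulVec, hA, one_mulVec]

theorem Tloc_eq_mulVec (i : Fin N) : Tloc U lam g i = U *ᵥ fun ℓ => g (lam ℓ) * U i ℓ := by
  ext n
  simp only [Tloc, mulVec, dotProduct]
  exact sum_congr rfl fun ℓ _ => by ring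

variable {U}

theorem sum_Tloc_sq (hU : U.transpose * U = 1) (n : Fin N) :
    ∑ m, Tloc U lam g n m ^ 2 = ∑ ℓ, g (lam ℓ) ^ 2 * U n ℓ ^ 2 := by
  have h := dotProduct_mulVec_self_of_transpose_mul_self hU fun ℓ => g (lam ℓ) * U n ℓ
  simp only [dotProduct, ← Tloc_eq_mulVec] at h
  simp only [sq, h]
  exact sum_congr rfl fun ℓ _ => by ring

theorem sum_sum_Tloc_sq (hU : U.transpose * U = 1) :
    ∑ n, ∑ m, Tloc U lam g n m ^ 2 = ∑ ℓ, g (lam ℓ) ^ 2 := by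
  have hcol : ∀ ℓ, ∑ n, U n ℓ ^ 2 = 1 := fun ℓ => by
    simpa [mul_apply, sq] using congrFun₂ hU ℓ ℓ
  simp only [sum_Tloc_sq lam g hU]
  rw [sum_comm]
  simp only [← mul_sum, hcol, mul_one]

variable {lam g} {K : Finset (Fin N)}

theorem Tloc_sq_le (hU : U.transpose * U = 1) (hK : ∀ ℓ ∉ K, g (lam ℓ) = 0) (i n : Fin N) :
    Tloc U lam g i n ^ 2 ≤ (∑ m, Tloc U lam g n m ^ 2) * ∑ ℓ ∈ K, U i ℓ ^ 2 := by
  have hsupp : Tloc U lam g i n = ∑ ℓ ∈ K, g (lam ℓ) * U n ℓ * U i ℓ := by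
    rw [Tloc, ← sum_subset (subset_univ K) fun ℓ _ hℓ => by simp [hK ℓ hℓ]]
    exact sum_congr rfl fun ℓ _ => by ring
  rw [hsupp, sum_Tloc_sq lam g hU]
  refine (sum_mul_sq_le_sq_mul_sq K _ _).trans (mul_le_mul_of_nonneg_right ?_ (by positivity))
  simp only [mul_pow]
  exact sum_le_sum_of_subset_of_nonneg (subset_univ K) fun ℓ _ _ => by positivity

theorem sum_Tloc_sq_le_iSup_mul (hU : U.transpose * U = 1) (hK : ∀ ℓ ∉ K, g (lam ℓ) = 0)
    (i : Fin N) :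
    ∑ m, Tloc U lam g i m ^ 2 ≤ (⨆ ℓ, g (lam ℓ) ^ 2) * ∑ ℓ ∈ K, U i ℓ ^ 2 := by
  rw [sum_Tloc_sq lam g hU, ← sum_subset (subset_univ K) fun ℓ _ hℓ => by simp [hK ℓ hℓ],
    mul_sum]
  exact sum_le_sum fun ℓ _ => mul_le_mul_of_nonneg_right
    (le_ciSup (Set.finite_range fun ℓ => g (lam ℓ) ^ 2).bddAbove ℓ) (sq_nonneg _)

end Localization

section AdaptedSampling

variable {N : ℕ} {U : Matrix (Fin N) (Fin N) ℝ} {lam : Fin N → ℝ} {g : ℝ → ℝ} {p : Fin N → ℝ}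

theorem sum_eq_one_of_eq_energy_div (hU : U.transpose * U = 1)
    (hpdef : ∀ n, p n = (∑ m, Tloc U lam g n m ^ 2) / ∑ ℓ, g (lam ℓ) ^ 2)
    (hg : ∑ ℓ, g (lam ℓ) ^ 2 ≠ 0) : ∑ n, p n = 1 := by
  rw [sum_congr rfl fun n _ => hpdef n, ← sum_div, sum_sum_Tloc_sq lam g hU, div_self hg]

theorem Tloc_sq_div_le_of_eq_energy_div (hU : U.transpose * U = 1) {K : Finset (Fin N)}
    (hK : ∀ ℓ ∉ K, g (lam ℓ) = 0) {n : Fin N} (hpn : 0 < p n)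
    (hpdef : p n = (∑ m, Tloc U lam g n m ^ 2) / ∑ ℓ, g (lam ℓ) ^ 2) (i : Fin N) :
    Tloc U lam g i n ^ 2 / p n ≤ (∑ ℓ, g (lam ℓ) ^ 2) * ∑ ℓ ∈ K, U i ℓ ^ 2 := by
  have hg : ∑ ℓ, g (lam ℓ) ^ 2 ≠ 0 := fun h => by simp [h] at hpdef; linarith
  rw [div_le_iff₀ hpn, mul_right_comm, mul_comm _ (p n), ← (div_eq_iff hg).1 hpdef.symm]
  exact Tloc_sq_le hU hK i n

end AdaptedSampling

theorem exp_neg_le_of_sample_size {A Gs S T δ ε k M : ℝ} (hA : 0 < A) (hS : 0 < S)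
    (hT : 0 < T) (hTS : T ≤ Gs * S) (hδ : 0 < δ) (hk : 1 ≤ k) (hε : 0 < ε) (hε1 : ε < 1)
    (hM : M ≥ 2 / δ ^ 2 * (A * Gs * S ^ 2 / T ^ 2) * (1 + δ / 3) * log (k / ε)) :
    exp (-(M * δ ^ 2 * T / (2 * (A * S)))) ≤ ε := by
  have hlog : 0 < log (1 / ε) :=
    log_pos (by rw [one_div]; exact one_lt_inv_iff₀.2 ⟨hε, hε1⟩)
  have hlogk : log (1 / ε) ≤ (1 + δ / 3) * log (k / ε) := by
    have h := log_le_log (by positivity) (div_le_div_of_nonneg_right hk hε.le)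
    exact h.trans (le_mul_of_one_le_left (hlog.trans_le h).le (by linarith))
  -- `A Gs S² / T² = (A S / T) (Gs S / T)` and the second factor is at least `1`
  have ha : A * S / T ≤ A * Gs * S ^ 2 / T ^ 2 := by
    rw [div_le_div_iff₀ hT (by positivity)]
    nlinarith [mul_le_mul_of_nonneg_left hTS (by positivity : 0 ≤ A * S * T)]
  have hMR : 2 / δ ^ 2 * (A * S / T) * log (1 / ε) ≤ M :=
    calc 2 / δ ^ 2 * (A * S / T) * log (1 / ε)
        ≤ 2 / δ ^ 2 * (A * Gs * S ^ 2 / T ^ 2) * ((1 + δ / 3) * log (k / ε)) := by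
          have : 0 ≤ A * Gs * S ^ 2 / T ^ 2 := (div_pos (mul_pos hA hS) hT).le.trans ha
          gcongr
      _ ≤ M := hM.trans_eq' (by ring)
  rw [← le_log_iff_exp_le hε, ← neg_neg (log ε), ← log_inv, ← one_div,
    neg_le_neg_iff, le_div_iff₀ (by positivity)]
  calc log (1 / ε) * (2 * (A * S))
        = 2 / δ ^ 2 * (A * S / T) * log (1 / ε) * (δ ^ 2 * T) := by
        field_simp
    _ ≤ M * (δ ^ 2 * T) := by gcongr
    _ = M * δ ^ 2 * T := by ring

theorem per_node_energy_capture_general {N : ℕ}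
    (U : Matrix (Fin N) (Fin N) ℝ) (lam : Fin N → ℝ)
    (hU : U.transpose * U = 1)
    (g : ℝ → ℝ) (Ksupp : Finset (Fin N)) (hK : ∀ ℓ, ℓ ∈ Ksupp ↔ g (lam ℓ) ≠ 0)
    (p : Fin N → ℝ) (hp : ∀ n, 0 < p n)
    (hpdef : ∀ n, p n = (∑ m, (Tloc U lam g n m) ^ 2) / (∑ ℓ, (g (lam ℓ)) ^ 2))
    (i : Fin N) (M : ℕ) (δ ε : ℝ) (hδ : 0 < δ) (hε : 0 < ε)
    (hM : (M : ℝ) ≥ 2 / δ ^ 2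
        * ((∑ ℓ, (g (lam ℓ)) ^ 2) * (⨆ ℓ : Fin N, (g (lam ℓ)) ^ 2)
            * (∑ ℓ ∈ Ksupp, (U i ℓ) ^ 2) ^ 2
          / (∑ m, (Tloc U lam g i m) ^ 2) ^ 2)
        * (1 + δ / 3) * Real.log (Ksupp.card / ε)) :
    1 - ε ≤ ∑ ω : Fin M → Fin N,
      if ((1 / (M : ℝ)) * ∑ j, (Tloc U lam g i (ω j)) ^ 2 / p (ω j))
            / (∑ m, (Tloc U lam g i m) ^ 2) ≥ 1 - δ
        then ∏ j, p (ω j) else 0 := by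
  set G2 := ∑ ℓ, g (lam ℓ) ^ 2
  set T := ∑ m, Tloc U lam g i m ^ 2
  set S := ∑ ℓ ∈ Ksupp, U i ℓ ^ 2
  set X : Fin N → ℝ := fun n => Tloc U lam g i n ^ 2 / p n
  show 1 - ε ≤ iidProb p M fun ω => (1 / (M : ℝ) * ∑ j, X (ω j)) / T ≥ 1 - δ
  have hp0 : ∀ n, 0 ≤ p n := fun n => (hp n).le
  rcases le_or_gt 1 ε with hε1 | hε1
  · exact (sub_nonpos.2 hε1).trans (iidProb_nonneg hp0 _)
  have hg0 : ∀ ℓ ∉ Ksupp, g (lam ℓ) = 0 := fun ℓ hℓ => not_not.1 (mt (hK ℓ).2 hℓ)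
  obtain ⟨hT, hG2⟩ : 0 < T ∧ 0 < G2 :=
    (div_pos_iff.1 (hpdef i ▸ hp i)).resolve_right fun h =>
      (sum_nonneg fun m _ => sq_nonneg _ : 0 ≤ T).not_gt h.1
  have hp1 : ∑ n, p n = 1 := sum_eq_one_of_eq_energy_div hU hpdef hG2.ne'
  have hXR : ∀ n, X n ≤ G2 * S := fun n => Tloc_sq_div_le_of_eq_energy_div hU hg0 (hp n) (hpdef n) i
  have hmean : ∑ n, p n * X n = T := sum_congr rfl fun n _ => mul_div_cancel₀ _ (hp n).ne'
  have hTS : T ≤ (⨆ ℓ, g (lam ℓ) ^ 2) * S := sum_Tloc_sq_le_iSup_mul hU hg0 i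
  have hS : 0 < S :=
    pos_of_mul_pos_right (hT.trans_le hTS) (Real.iSup_nonneg fun ℓ => sq_nonneg _)
  have hk : (1 : ℝ) ≤ Ksupp.card :=
    Nat.one_le_cast.2 (card_pos.2 (nonempty_of_sum_ne_zero hS.ne'))
  have hfail := exp_neg_le_of_sample_size hG2 hS hT hTS hδ hk hε hε1 hM
  have hsuccess := one_sub_exp_le_iidProb_sampleMean_div_ge (M := M) hp0 hp1
    (fun n => div_nonneg (sq_nonneg _) (hp0 n)) (by positivity) hXR hδ.le (hmean ▸ hT)
  rw [hmean] at hsuccess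
  linarith

/-- Per-node energy capture (Theorem 2): under the adapted sampling scheme
`p_i = ‖T_i g‖₂²/‖g(λ)‖₂²` with `M` i.i.d. samples, for a fixed node `i` and
`δ ∈ (0,1)`, if `M ≥ (2a/δ²)(1 + δ/3) log(k/ε)` with
`a = ‖g(λ)‖₂² ‖g(λ)‖∞² ‖U_k* δ_i‖₂⁴ / ‖T_i g‖₂⁴`, then with probability at least
`1 − ε` (over the draw `ω` with product weights `Π_j p_{ω_j}`):
`(1/M)‖MP^{−1/2}T_i g‖₂² / ‖T_i g‖₂² ≥ 1 − δ`. -/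
theorem per_node_energy_capture {N : ℕ} (hN : 0 < N)
    (U : Matrix (Fin N) (Fin N) ℝ) (lam : Fin N → ℝ)
    (hU : U.transpose * U = 1) (hU' : U * U.transpose = 1)
    (g : ℝ → ℝ) (Ksupp : Finset (Fin N)) (hK : ∀ ℓ, ℓ ∈ Ksupp ↔ g (lam ℓ) ≠ 0)
    (p : Fin N → ℝ) (hp : ∀ n, 0 < p n)
    (hpdef : ∀ n, p n = (∑ m, (Tloc U lam g n m) ^ 2) / (∑ ℓ, (g (lam ℓ)) ^ 2))
    (i : Fin N) (M : ℕ) (δ ε : ℝ) (hδ : 0 < δ) (hδ1 : δ < 1) (hε : 0 < ε)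
    (hM : (M : ℝ) ≥ 2 / δ ^ 2
        * ((∑ ℓ, (g (lam ℓ)) ^ 2) * (⨆ ℓ : Fin N, (g (lam ℓ)) ^ 2)
            * (∑ ℓ ∈ Ksupp, (U i ℓ) ^ 2) ^ 2
          / (∑ m, (Tloc U lam g i m) ^ 2) ^ 2)
        * (1 + δ / 3) * Real.log (Ksupp.card / ε)) :
    1 - ε ≤ ∑ ω : Fin M → Fin N,
      if ((1 / (M : ℝ)) * ∑ j, (Tloc U lam g i (ω j)) ^ 2 / p (ω j))
            / (∑ m, (Tloc U lam g i m) ^ 2) ≥ 1 - δ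
        then ∏ j, p (ω j) else 0 :=
  per_node_energy_capture_general U lam hU g Ksupp hK p hp hpdef i M δ ε hδ hε hM
end
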